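/- The function q(ρ) = 1 + (1-ρ)√((3-ρ)(1+ρ))/(2π) on the open interval (-1, 1) attains its unique maximum at ρ = 1 - √2. -/

import Mathlib

/-!
Substituting `x = 1 - ρ` turns `(3 - ρ)(1 + ρ)` into `4 - x²`, and by AM-GM
`x √(4 - x²) ≤ (x² + (4 - x²)) / 2 = 2`, with equality only when `x = √(4 - x²)`, i.e. `x = √2`.
-/

open Real

noncomputable def q (ρ : ℝ) : ℝ :=
  1 + (1 - ρ) * Real.sqrt ((3 - ρ) * (1 + ρ)) / (2 * π)

lemma sqrt_two_mul_sqrt_four_sub_sq : √2 * √(4 - √2 ^ 2) = 2 := by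
  rw [sq_sqrt zero_le_two, show (4 : ℝ) - 2 = 2 by norm_num, mul_self_sqrt zero_le_two]

lemma mul_sqrt_four_sub_sq_lt_two {x : ℝ} (hx : x ≠ √2) : x * √(4 - x ^ 2) < 2 := by
  rcases le_or_gt x 0 with hx_nonpos | hx_pos
  · nlinarith [sqrt_nonneg (4 - x ^ 2)]
  rcases lt_or_ge (4 - x ^ 2) 0 with hneg | hnonneg
  · rw [sqrt_eq_zero_of_nonpos hneg.le, mul_zero]
    exact two_pos
  have hsq : √(4 - x ^ 2) ^ 2 = 4 - x ^ 2 := sq_sqrt hnonneg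
  have hne : x ≠ √(4 - x ^ 2) := by
    intro heq
    refine hx ((sqrt_eq_iff_eq_sq zero_le_two hx_pos.le).2 ?_).symm
    rw [← heq] at hsq
    linarith
  nlinarith [sq_pos_of_ne_zero (sub_ne_zero.2 hne)]

lemma q_eq_one_add (ρ : ℝ) : q ρ = 1 + (1 - ρ) * √(4 - (1 - ρ) ^ 2) / (2 * π) := by
  rw [q, show (3 - ρ) * (1 + ρ) = 4 - (1 - ρ) ^ 2 by ring]

theorem stmt16 :
    (1 - Real.sqrt 2) ∈ Set.Ioo (-1 : ℝ) 1 ∧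
    ∀ ρ ∈ Set.Ioo (-1 : ℝ) 1, ρ ≠ 1 - Real.sqrt 2 →
      q ρ < q (1 - Real.sqrt 2) := by
  have h_one_lt : 1 < √2 := by
    rw [lt_sqrt zero_le_one]
    norm_num
  have h_lt_two : √2 < 2 := by
    rw [sqrt_lt' two_pos]
    norm_num
  refine ⟨⟨by linarith, by linarith⟩, fun ρ _ hρ => ?_⟩
  rw [q_eq_one_add, q_eq_one_add, sub_sub_cancel, sqrt_two_mul_sqrt_four_sub_sq]
  gcongr
  exact mul_sqrt_four_sub_sq_lt_two fun h => hρ (by linarith)
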